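/- In the formal power series ring ℤ[[T₁,T₂,T₃,T₄]], let S be the power series S = Σ T₁^{a+b+c} T₂^{a+(b+c)/2} T₃^{b+(a+c)/2} T₄^{c+(a+b)/2}, the sum taken over all triples (a,b,c) of nonnegative integers with a ≡ b ≡ c (mod 2) (for such triples all exponents are nonnegative integers; equivalently S = Σ_{a',b',c' ≥ 0} ( T^{a'(2,2,1,1)+b'(2,1,2,1)+c'(2,1,1,2)} + T^{(3,2,2,2)+a'(2,2,1,1)+b'(2,1,2,1)+c'(2,1,1,2)} )). Then S · (1 − T^{(2,2,1,1)})(1 − T^{(2,1,2,1)})(1 − T^{(2,1,1,2)}) = 1 + T^{(3,2,2,2)}. Consequently (multiplying by 1 − T^{(2,1,1,1)}) the Poincaré series of the divisorial filtration of the D₄ surface singularity equals P_{D₄}(T) = (1 − T^{(2,1,1,1)})(1 + T^{(3,2,2,2)}) / ((1 − T^{(2,2,1,1)})(1 − T^{(2,1,2,1)})(1 − T^{(2,1,1,2)})). -/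

import Mathlib

open MvPowerSeries

/-- The series `S = Σ T₁^{a+b+c} T₂^{a+(b+c)/2} T₃^{b+(a+c)/2} T₄^{c+(a+b)/2}` in
`ℤ[[T₁,T₂,T₃,T₄]]`, the sum over all triples `(a,b,c)` of nonnegative integers with
`a ≡ b ≡ c (mod 2)`. Since distinct triples give distinct exponent vectors, `S` is the
power series whose coefficient at `T^d` is `1` if `d` arises from such a triple and `0`
otherwise. -/
noncomputable def SD4 : MvPowerSeries (Fin 4) ℤ := fun d =>
  letI := Classical.propDecidable
  if ∃ a b c : ℕ, a % 2 = b % 2 ∧ b % 2 = c % 2 ∧ a + b + c = d 0 ∧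
      2 * a + b + c = 2 * d 1 ∧ a + 2 * b + c = 2 * d 2 ∧ a + b + 2 * c = 2 * d 3
    then 1 else 0

namespace D4Aux

open Finsupp

/-- the representation predicate -/
def P (ε a b c : ℕ) (d : Fin 4 →₀ ℕ) : Prop :=
  ε ≤ 1 ∧ d 0 = 3*ε+2*a+2*b+2*c ∧ d 1 = 2*ε+2*a+b+c ∧
    d 2 = 2*ε+a+2*b+c ∧ d 3 = 2*ε+a+b+2*c

noncomputable def F3 : MvPowerSeries (Fin 4) ℤ := fun d =>
  letI := Classical.propDecidable
  if ∃ ε a b c : ℕ, P ε a b c d then 1 else 0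

noncomputable def F2 : MvPowerSeries (Fin 4) ℤ := fun d =>
  letI := Classical.propDecidable
  if ∃ ε a b : ℕ, P ε a b 0 d then 1 else 0

noncomputable def F1 : MvPowerSeries (Fin 4) ℤ := fun d =>
  letI := Classical.propDecidable
  if ∃ ε a : ℕ, P ε a 0 0 d then 1 else 0

noncomputable def E0 : Fin 4 →₀ ℕ := single 0 3 + single 1 2 + single 2 2 + single 3 2
noncomputable def E1 : Fin 4 →₀ ℕ := single 0 2 + single 1 2 + single 2 1 + single 3 1
noncomputable def E2 : Fin 4 →₀ ℕ := single 0 2 + single 1 1 + single 2 2 + single 3 1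
noncomputable def E3 : Fin 4 →₀ ℕ := single 0 2 + single 1 1 + single 2 1 + single 3 2

lemma E0_apply : E0 0 = 3 ∧ E0 1 = 2 ∧ E0 2 = 2 ∧ E0 3 = 2 := by
  refine ⟨?_, ?_, ?_, ?_⟩ <;> simp [E0, Finsupp.single_apply]

lemma E1_apply : E1 0 = 2 ∧ E1 1 = 2 ∧ E1 2 = 1 ∧ E1 3 = 1 := by
  refine ⟨?_, ?_, ?_, ?_⟩ <;> simp [E1, Finsupp.single_apply]

lemma E2_apply : E2 0 = 2 ∧ E2 1 = 1 ∧ E2 2 = 2 ∧ E2 3 = 1 := by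
  refine ⟨?_, ?_, ?_, ?_⟩ <;> simp [E2, Finsupp.single_apply]

lemma E3_apply : E3 0 = 2 ∧ E3 1 = 1 ∧ E3 2 = 1 ∧ E3 3 = 2 := by
  refine ⟨?_, ?_, ?_, ?_⟩ <;> simp [E3, Finsupp.single_apply]

lemma le_iff_four (e d : Fin 4 →₀ ℕ) :
    e ≤ d ↔ e 0 ≤ d 0 ∧ e 1 ≤ d 1 ∧ e 2 ≤ d 2 ∧ e 3 ≤ d 3 := by
  rw [Finsupp.le_def]
  constructor
  · intro h; exact ⟨h 0, h 1, h 2, h 3⟩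
  · rintro ⟨h0, h1, h2, h3⟩ i; fin_cases i <;> assumption

lemma ind (A B C : Prop) [Decidable A] [Decidable B] [Decidable C]
    (h1 : A ↔ B ∨ C) (h2 : ¬(B ∧ C)) :
    (if A then (1:ℤ) else 0) = (if B then 1 else 0) + (if C then 1 else 0) := by
  split_ifs <;> simp_all

lemma step (φ ψ : MvPowerSeries (Fin 4) ℤ) (e : Fin 4 →₀ ℕ)
    (h : ∀ d : Fin 4 →₀ ℕ,
      coeff d φ = coeff d ψ + (if e ≤ d then coeff (d - e) φ else 0)) :
    φ * (1 - monomial e 1) = ψ := by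
  ext d
  rw [mul_sub, mul_one, map_sub, coeff_mul_monomial, h d]
  split_ifs <;> ring

lemma SD4_eq : SD4 = F3 := by
  funext d
  classical
  simp only [SD4, F3]
  refine if_congr ?_ rfl rfl
  constructor
  · rintro ⟨a, b, c, hab, hbc, h0, h1, h2, h3⟩
    exact ⟨a % 2, a / 2, b / 2, c / 2, by omega, by omega, by omega, by omega, by omega⟩
  · rintro ⟨ε, a, b, c, hε, h0, h1, h2, h3⟩
    exact ⟨2*a+ε, 2*b+ε, 2*c+ε, by omega, by omega, by omega, by omega, by omega⟩

lemma step3 : F3 * (1 - monomial E3 1) = F2 := by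
  apply step
  intro d
  classical
  obtain ⟨e0, e1, e2, e3⟩ := E3_apply
  have hle := le_iff_four E3 d
  have hsub : ∀ i, (d - E3) i = d i - E3 i := fun i => Finsupp.tsub_apply d E3 i
  show (if _ then (1:ℤ) else 0) = (if _ then 1 else 0) + (if _ then (if _ then (1:ℤ) else 0) else 0)
  rw [← ite_and]
  apply ind
  · constructor
    · rintro ⟨ε, a, b, c, hε, h0, h1, h2, h3⟩
      rcases c with _ | c
      · exact Or.inl ⟨ε, a, b, hε, h0, h1, h2, h3⟩
      · refine Or.inr ⟨hle.2 ⟨by omega, by omega, by omega, by omega⟩, ε, a, b, c,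
          hε, ?_, ?_, ?_, ?_⟩ <;> rw [hsub] <;> omega
    · rintro (⟨ε, a, b, hε, h0, h1, h2, h3⟩ | ⟨hl, ε, a, b, c, hε, h0, h1, h2, h3⟩)
      · exact ⟨ε, a, b, 0, hε, by omega, by omega, by omega, by omega⟩
      · obtain ⟨l0, l1, l2, l3⟩ := hle.1 hl
        rw [hsub] at h0 h1 h2 h3
        exact ⟨ε, a, b, c + 1, hε, by omega, by omega, by omega, by omega⟩
  · rintro ⟨⟨ε, a, b, hε, h0, h1, h2, h3⟩, hl, ε', a', b', c', hε', h0', h1', h2', h3'⟩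
    obtain ⟨l0, l1, l2, l3⟩ := hle.1 hl
    rw [hsub] at h0' h1' h2' h3'
    omega

lemma step2 : F2 * (1 - monomial E2 1) = F1 := by
  apply step
  intro d
  classical
  obtain ⟨e0, e1, e2, e3⟩ := E2_apply
  have hle := le_iff_four E2 d
  have hsub : ∀ i, (d - E2) i = d i - E2 i := fun i => Finsupp.tsub_apply d E2 i
  show (if _ then (1:ℤ) else 0) = (if _ then 1 else 0) + (if _ then (if _ then (1:ℤ) else 0) else 0)
  rw [← ite_and]
  apply ind
  · constructor
    · rintro ⟨ε, a, b, hε, h0, h1, h2, h3⟩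
      rcases b with _ | b
      · exact Or.inl ⟨ε, a, hε, h0, h1, h2, h3⟩
      · refine Or.inr ⟨hle.2 ⟨by omega, by omega, by omega, by omega⟩, ε, a, b,
          hε, ?_, ?_, ?_, ?_⟩ <;> rw [hsub] <;> omega
    · rintro (⟨ε, a, hε, h0, h1, h2, h3⟩ | ⟨hl, ε, a, b, hε, h0, h1, h2, h3⟩)
      · exact ⟨ε, a, 0, hε, by omega, by omega, by omega, by omega⟩
      · obtain ⟨l0, l1, l2, l3⟩ := hle.1 hl
        rw [hsub] at h0 h1 h2 h3
        exact ⟨ε, a, b + 1, hε, by omega, by omega, by omega, by omega⟩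
  · rintro ⟨⟨ε, a, hε, h0, h1, h2, h3⟩, hl, ε', a', b', hε', h0', h1', h2', h3'⟩
    obtain ⟨l0, l1, l2, l3⟩ := hle.1 hl
    rw [hsub] at h0' h1' h2' h3'
    omega

lemma step1 : F1 * (1 - monomial E1 1) = 1 + monomial E0 1 := by
  apply step
  intro d
  classical
  obtain ⟨e0, e1, e2, e3⟩ := E1_apply
  obtain ⟨f0, f1, f2, f3⟩ := E0_apply
  have hle := le_iff_four E1 d
  have hsub : ∀ i, (d - E1) i = d i - E1 i := fun i => Finsupp.tsub_apply d E1 i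
  rw [map_add, coeff_one, coeff_monomial]
  show (if _ then (1:ℤ) else 0) =
    ((if _ then 1 else 0) + (if _ then 1 else 0)) + (if _ then (if _ then (1:ℤ) else 0) else 0)
  rw [← ite_and, add_assoc]
  have hd0 : d = 0 ↔ d 0 = 0 ∧ d 1 = 0 ∧ d 2 = 0 ∧ d 3 = 0 := by
    constructor
    · intro h; simp [h]
    · rintro ⟨h0, h1, h2, h3⟩; ext i; fin_cases i <;> simpa
  have hdE : d = E0 ↔ d 0 = 3 ∧ d 1 = 2 ∧ d 2 = 2 ∧ d 3 = 2 := by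
    constructor
    · intro h; rw [h]; exact ⟨f0, f1, f2, f3⟩
    · rintro ⟨h0, h1, h2, h3⟩; ext i; fin_cases i <;> simp_all
  rw [ind _ (d = 0) ((d = E0) ∨ (E1 ≤ d ∧ ∃ ε a : ℕ, P ε a 0 0 (d - E1))) ?_ ?_,
    ind ((d = E0) ∨ (E1 ≤ d ∧ ∃ ε a : ℕ, P ε a 0 0 (d - E1))) (d = E0)
      (E1 ≤ d ∧ ∃ ε a : ℕ, P ε a 0 0 (d - E1)) Iff.rfl ?_]
  · rintro ⟨h, hl, ε', a', hε', h0', h1', h2', h3'⟩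
    obtain ⟨h0, h1, h2, h3⟩ := hdE.1 h
    obtain ⟨l0, l1, l2, l3⟩ := hle.1 hl
    rw [hsub] at h0' h1' h2' h3'
    omega
  · constructor
    · rintro ⟨ε, a, hε, h0, h1, h2, h3⟩
      rcases a with _ | a
      · rcases Nat.le_one_iff_eq_zero_or_eq_one.1 hε with rfl | rfl
        · exact Or.inl (hd0.2 ⟨by omega, by omega, by omega, by omega⟩)
        · exact Or.inr (Or.inl (hdE.2 ⟨by omega, by omega, by omega, by omega⟩))
      · refine Or.inr (Or.inr ⟨hle.2 ⟨by omega, by omega, by omega, by omega⟩, ε, a,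
          hε, ?_, ?_, ?_, ?_⟩) <;> rw [hsub] <;> omega
    · rintro (h | h | ⟨hl, ε, a, hε, h0, h1, h2, h3⟩)
      · obtain ⟨h0, h1, h2, h3⟩ := hd0.1 h
        exact ⟨0, 0, by omega, by omega, by omega, by omega, by omega⟩
      · obtain ⟨h0, h1, h2, h3⟩ := hdE.1 h
        exact ⟨1, 0, by omega, by omega, by omega, by omega, by omega⟩
      · obtain ⟨l0, l1, l2, l3⟩ := hle.1 hl
        rw [hsub] at h0 h1 h2 h3
        exact ⟨ε, a + 1, hε, by omega, by omega, by omega, by omega⟩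
  · rintro ⟨h, (h' | ⟨hl, ε', a', hε', h0', h1', h2', h3'⟩)⟩
    · obtain ⟨h0, h1, h2, h3⟩ := hd0.1 h
      obtain ⟨h0', h1', h2', h3'⟩ := hdE.1 h'
      omega
    · obtain ⟨h0, h1, h2, h3⟩ := hd0.1 h
      obtain ⟨l0, l1, l2, l3⟩ := hle.1 hl
      omega

lemma X1 : (X 0 : MvPowerSeries (Fin 4) ℤ) ^ 2 * X 1 ^ 2 * X 2 * X 3 = monomial E1 1 := by
  rw [X_pow_eq, X_pow_eq, X_def, X_def, monomial_mul_monomial, monomial_mul_monomial,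
    monomial_mul_monomial, mul_one, mul_one, mul_one, E1, add_assoc, add_assoc]

lemma X2 : (X 0 : MvPowerSeries (Fin 4) ℤ) ^ 2 * X 1 * X 2 ^ 2 * X 3 = monomial E2 1 := by
  rw [X_pow_eq, X_pow_eq, X_def, X_def, monomial_mul_monomial, monomial_mul_monomial,
    monomial_mul_monomial, mul_one, mul_one, mul_one, E2, add_assoc, add_assoc]

lemma X3 : (X 0 : MvPowerSeries (Fin 4) ℤ) ^ 2 * X 1 * X 2 * X 3 ^ 2 = monomial E3 1 := by
  rw [X_pow_eq, X_pow_eq, X_def, X_def, monomial_mul_monomial, monomial_mul_monomial,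
    monomial_mul_monomial, mul_one, mul_one, mul_one, E3, add_assoc, add_assoc]

lemma X0 : (X 0 : MvPowerSeries (Fin 4) ℤ) ^ 3 * X 1 ^ 2 * X 2 ^ 2 * X 3 ^ 2 = monomial E0 1 := by
  rw [X_pow_eq, X_pow_eq, X_pow_eq, X_pow_eq, monomial_mul_monomial, monomial_mul_monomial,
    monomial_mul_monomial, mul_one, mul_one, mul_one, E0, add_assoc, add_assoc]

end D4Aux


open D4Aux in
/-- In `ℤ[[T₁,T₂,T₃,T₄]]` one has
`S · (1 − T^{(2,2,1,1)})(1 − T^{(2,1,2,1)})(1 − T^{(2,1,1,2)}) = 1 + T^{(3,2,2,2)}`;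
consequently, multiplying by `1 − T^{(2,1,1,1)}`, the Poincaré series of the divisorial
filtration of the `D₄` surface singularity equals
`P_{D₄}(T) = (1 − T^{(2,1,1,1)})(1 + T^{(3,2,2,2)}) / ((1 − T^{(2,2,1,1)})(1 − T^{(2,1,2,1)})(1 − T^{(2,1,1,2)}))`. -/
theorem poincare_series_D4 :
    SD4 * (1 - (X 0 : MvPowerSeries (Fin 4) ℤ) ^ 2 * X 1 ^ 2 * X 2 * X 3)
        * (1 - (X 0 : MvPowerSeries (Fin 4) ℤ) ^ 2 * X 1 * X 2 ^ 2 * X 3)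
        * (1 - (X 0 : MvPowerSeries (Fin 4) ℤ) ^ 2 * X 1 * X 2 * X 3 ^ 2) =
      1 + (X 0 : MvPowerSeries (Fin 4) ℤ) ^ 3 * X 1 ^ 2 * X 2 ^ 2 * X 3 ^ 2 ∧
    ((1 - (X 0 : MvPowerSeries (Fin 4) ℤ) ^ 2 * X 1 * X 2 * X 3) * SD4)
        * (1 - (X 0 : MvPowerSeries (Fin 4) ℤ) ^ 2 * X 1 ^ 2 * X 2 * X 3)
        * (1 - (X 0 : MvPowerSeries (Fin 4) ℤ) ^ 2 * X 1 * X 2 ^ 2 * X 3)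
        * (1 - (X 0 : MvPowerSeries (Fin 4) ℤ) ^ 2 * X 1 * X 2 * X 3 ^ 2) =
      (1 - (X 0 : MvPowerSeries (Fin 4) ℤ) ^ 2 * X 1 * X 2 * X 3) *
        (1 + (X 0 : MvPowerSeries (Fin 4) ℤ) ^ 3 * X 1 ^ 2 * X 2 ^ 2 * X 3 ^ 2) := by
  have key : SD4 * (1 - (X 0 : MvPowerSeries (Fin 4) ℤ) ^ 2 * X 1 ^ 2 * X 2 * X 3)
      * (1 - (X 0 : MvPowerSeries (Fin 4) ℤ) ^ 2 * X 1 * X 2 ^ 2 * X 3)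
      * (1 - (X 0 : MvPowerSeries (Fin 4) ℤ) ^ 2 * X 1 * X 2 * X 3 ^ 2) =
      1 + (X 0 : MvPowerSeries (Fin 4) ℤ) ^ 3 * X 1 ^ 2 * X 2 ^ 2 * X 3 ^ 2 := by
    rw [X0, X1, X2, X3, SD4_eq, ← step1, ← step2, ← step3]
    ring
  refine ⟨key, ?_⟩
  linear_combination ((1 : MvPowerSeries (Fin 4) ℤ) - X 0 ^ 2 * X 1 * X 2 * X 3) * key
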